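/- arXiv:2107.08102 — 4 statements merged into one kernel-verified Lean document; each statement's English description precedes it below -/
import Mathlib

section
/- Let n be a positive even integer, e an integer with n < e < 3n/2, and l_1,…,l_n nonnegative integers with Σ_{i=1}^{n} l_i = n(e − n − 1), and set Δ = 3n/2 − e and L_i = l_i + Δ for i = 1,…,n. If the PRN3DM instance (n, e, l_1,…,l_n) is a yes-instance (there exist a partition A, B of {1,…,n} into sets of size n/2 and bijections π_A : A → {1,…,n/2}, σ_A : A → {n/2+1,…,n}, π_B : B → {n/2+1,…,n}, σ_B : B → {1,…,n/2} with π_A(i) + l_i + σ_A(i) = e on A and π_B(i) + l_i + σ_B(i) = e on B), then there exists a feasible schedule s for the two-machine unit-time open shop with time lags L_1,…,L_n whose total completion time Σ_{i=1}^{n} C_i equals F = (n/2)(3n/2 + 1). -/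
/-- The PRN3DM instance `(n, e, l)` is a yes-instance: there is a partition of
`{1,…,n}` into `A` and `B` of size `n/2` each, and bijections
`πA : A → {1,…,n/2}`, `σA : A → {n/2+1,…,n}`, `πB : B → {n/2+1,…,n}`,
`σB : B → {1,…,n/2}` with `πA i + l i + σA i = e` on `A` and
`πB i + l i + σB i = e` on `B`. -/
def PRN3DMYes (n e : ℕ) (l : ℕ → ℕ) : Prop :=
  ∃ (A B : Finset ℕ) (πA σA πB σB : ℕ → ℕ),
    Disjoint A B ∧ A ∪ B = Finset.Icc 1 n ∧
    A.card = n / 2 ∧ B.card = n / 2 ∧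
    Set.BijOn πA ↑A ↑(Finset.Icc 1 (n / 2)) ∧
    Set.BijOn σA ↑A ↑(Finset.Icc (n / 2 + 1) n) ∧
    Set.BijOn πB ↑B ↑(Finset.Icc (n / 2 + 1) n) ∧
    Set.BijOn σB ↑B ↑(Finset.Icc 1 (n / 2)) ∧
    (∀ i ∈ A, πA i + l i + σA i = e) ∧
    (∀ i ∈ B, πB i + l i + σB i = e)

/-- A feasible integer schedule for the two-machine unit-time open shop with
time lags `L` on jobs `{1,…,n}`: `s i m` is the start time of the operation of
job `i` on machine `m`; each machine processes at most one operation at a time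
(injectivity of start times on each machine), and the later operation of a job
starts at least `L i + 1` after the earlier one starts (i.e. at least `L i`
after the earlier operation completes). -/
def FeasibleSchedule (n : ℕ) (L : ℕ → ℕ) (s : ℕ → Fin 2 → ℕ) : Prop :=
  (∀ m : Fin 2, Set.InjOn (fun i => s i m) ↑(Finset.Icc 1 n)) ∧
  (∀ i ∈ Finset.Icc 1 n, s i 0 + L i + 1 ≤ s i 1 ∨ s i 1 + L i + 1 ≤ s i 0)

/-- The completion time `C i` of job `i`: its later unit-time operation's
start time plus one. -/
def completionTime (s : ℕ → Fin 2 → ℕ) (i : ℕ) : ℕ := max (s i 0) (s i 1) + 1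

/-! The matching is read as a schedule. An A-job `i` runs on machine 0 at time `πA i - 1`, in the
first block `[0, n/2)`, and on machine 1 at time `3n/2 - σA i`, in the second block `[n/2, n)`;
a B-job runs on machine 1 at time `σB i - 1` and on machine 0 at time `3n/2 - πB i`. Since
`π i + l i + σ i = e`, the gap between the two operations of a job is exactly `l i + Δ`. Each
machine processes one part in each block and every job completes in the second block, so
`∑ C i = 2 ∑_{k = n/2}^{n-1} (k + 1) = (n/2)(3n/2 + 1)`. -/

open Finset

theorem Set.InjOn.union_of_mapsTo {α β : Type*} {f : α → β} {s₁ s₂ : Set α} {t₁ t₂ : Set β}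
    (h₁ : Set.InjOn f s₁) (h₂ : Set.InjOn f s₂) (hf₁ : Set.MapsTo f s₁ t₁)
    (hf₂ : Set.MapsTo f s₂ t₂) (ht : Disjoint t₁ t₂) : Set.InjOn f (s₁ ∪ s₂) := by
  rintro x (hx | hx) y (hy | hy) hxy
  exacts [h₁ hx hy hxy, (ht.ne_of_mem (hf₁ hx) (hf₂ hy) hxy).elim,
    (ht.ne_of_mem (hf₁ hy) (hf₂ hx) hxy.symm).elim, h₂ hx hy hxy]

theorem Nat.bijOn_sub_one_Icc (a b : ℕ) :
    Set.BijOn (· - 1) ↑(Icc (a + 1) b) ↑(Ico a b) := by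
  refine ⟨fun k hk => ?_, fun x hx y hy hxy => ?_, fun k hk => ⟨k + 1, ?_, by simp⟩⟩ <;>
    simp only [coe_Icc, coe_Ico, Set.mem_Icc, Set.mem_Ico] at * <;> omega

theorem Nat.bijOn_const_sub_Icc {a b c : ℕ} (hbc : b ≤ c) :
    Set.BijOn (c - ·) ↑(Icc (a + 1) b) ↑(Ico (c - b) (c - a)) := by
  refine ⟨fun k hk => ?_, fun x hx y hy hxy => ?_, fun k hk => ⟨c - k, ?_, ?_⟩⟩ <;>
    simp only [coe_Icc, coe_Ico, Set.mem_Icc, Set.mem_Ico] at * <;> omega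

theorem Nat.bijOn_three_mul_sub_Icc (t : ℕ) :
    Set.BijOn (3 * t - ·) ↑(Icc (t + 1) (2 * t)) ↑(Ico t (2 * t)) := by
  have h := Nat.bijOn_const_sub_Icc (a := t) (show 2 * t ≤ 3 * t by omega)
  rwa [show 3 * t - 2 * t = t by omega, show 3 * t - t = 2 * t by omega] at h

theorem Nat.sum_Ico_two_mul_succ_mul_two (t : ℕ) :
    (∑ k ∈ Ico t (2 * t), (k + 1)) * 2 = t * (3 * t + 1) := by
  have gauss (m : ℕ) : (∑ k ∈ range m, (k + 1)) * 2 = m * (m + 1) := by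
    induction m with
    | zero => simp
    | succ m ih => rw [sum_range_succ, add_mul, ih]; ring
  have hsplit := sum_range_add_sum_Ico (fun k => k + 1) (show t ≤ 2 * t by omega)
  have h₁ := gauss t
  have h₂ := gauss (2 * t)
  nlinarith

section MatchingSchedule

variable {t e i : ℕ} {l : ℕ → ℕ} {A B : Finset ℕ} {πA σA πB σB : ℕ → ℕ}

def matchingSchedule (t : ℕ) (A : Finset ℕ) (πA σA πB σB : ℕ → ℕ) (i : ℕ) : Fin 2 → ℕ :=
  if i ∈ A then ![πA i - 1, 3 * t - σA i] else ![3 * t - πB i, σB i - 1]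

theorem matchingSchedule_of_mem (hi : i ∈ A) :
    matchingSchedule t A πA σA πB σB i = ![πA i - 1, 3 * t - σA i] :=
  if_pos hi

theorem matchingSchedule_of_notMem (hi : i ∉ A) :
    matchingSchedule t A πA σA πB σB i = ![3 * t - πB i, σB i - 1] :=
  if_neg hi

theorem bijOn_matchingSchedule_zero_left (hπA : Set.BijOn πA ↑A ↑(Icc 1 t)) :
    Set.BijOn (matchingSchedule t A πA σA πB σB · 0) ↑A ↑(Ico 0 t) :=
  ((Nat.bijOn_sub_one_Icc 0 t).comp hπA).congr fun i hi => by
    simp [matchingSchedule_of_mem (Finset.mem_coe.1 hi)]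

theorem bijOn_matchingSchedule_one_left (hσA : Set.BijOn σA ↑A ↑(Icc (t + 1) (2 * t))) :
    Set.BijOn (matchingSchedule t A πA σA πB σB · 1) ↑A ↑(Ico t (2 * t)) :=
  ((Nat.bijOn_three_mul_sub_Icc t).comp hσA).congr fun i hi => by
    simp [matchingSchedule_of_mem (Finset.mem_coe.1 hi)]

theorem bijOn_matchingSchedule_zero_right (hAB : Disjoint A B)
    (hπB : Set.BijOn πB ↑B ↑(Icc (t + 1) (2 * t))) :
    Set.BijOn (matchingSchedule t A πA σA πB σB · 0) ↑B ↑(Ico t (2 * t)) :=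
  ((Nat.bijOn_three_mul_sub_Icc t).comp hπB).congr fun i hi => by
    simp [matchingSchedule_of_notMem (disjoint_right.1 hAB hi)]

theorem bijOn_matchingSchedule_one_right (hAB : Disjoint A B)
    (hσB : Set.BijOn σB ↑B ↑(Icc 1 t)) :
    Set.BijOn (matchingSchedule t A πA σA πB σB · 1) ↑B ↑(Ico 0 t) :=
  ((Nat.bijOn_sub_one_Icc 0 t).comp hσB).congr fun i hi => by
    simp [matchingSchedule_of_notMem (disjoint_right.1 hAB hi)]

theorem injOn_matchingSchedule (hAB : Disjoint A B) (hπA : Set.BijOn πA ↑A ↑(Icc 1 t))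
    (hσA : Set.BijOn σA ↑A ↑(Icc (t + 1) (2 * t)))
    (hπB : Set.BijOn πB ↑B ↑(Icc (t + 1) (2 * t))) (hσB : Set.BijOn σB ↑B ↑(Icc 1 t))
    (m : Fin 2) : Set.InjOn (matchingSchedule t A πA σA πB σB · m) ↑(A ∪ B) := by
  set s := matchingSchedule t A πA σA πB σB
  have hdisj : Disjoint (↑(Ico 0 t) : Set ℕ) ↑(Ico t (2 * t)) :=
    disjoint_coe.2 (Ico_disjoint_Ico_consecutive 0 t (2 * t))
  rw [coe_union]
  fin_cases m
  · have hA : Set.BijOn (s · 0) A (Ico 0 t) := bijOn_matchingSchedule_zero_left hπA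
    have hB : Set.BijOn (s · 0) B (Ico t (2 * t)) := bijOn_matchingSchedule_zero_right hAB hπB
    exact hA.injOn.union_of_mapsTo hB.injOn hA.mapsTo hB.mapsTo hdisj
  · have hA : Set.BijOn (s · 1) A (Ico t (2 * t)) := bijOn_matchingSchedule_one_left hσA
    have hB : Set.BijOn (s · 1) B (Ico 0 t) := bijOn_matchingSchedule_one_right hAB hσB
    exact hA.injOn.union_of_mapsTo hB.injOn hA.mapsTo hB.mapsTo hdisj.symm

theorem matchingSchedule_lag_left (he : e ≤ 3 * t) (hπA : Set.BijOn πA ↑A ↑(Icc 1 t))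
    (hi : i ∈ A) (heq : πA i + l i + σA i = e) :
    matchingSchedule t A πA σA πB σB i 0 + (l i + (3 * t - e)) + 1 ≤
      matchingSchedule t A πA σA πB σB i 1 := by
  have hπ := hπA.mapsTo hi
  simp only [coe_Icc, Set.mem_Icc] at hπ
  simp only [matchingSchedule_of_mem hi, Matrix.cons_val_zero, Matrix.cons_val_one]
  omega

theorem matchingSchedule_lag_right (he : e ≤ 3 * t) (hAB : Disjoint A B)
    (hσB : Set.BijOn σB ↑B ↑(Icc 1 t)) (hi : i ∈ B) (heq : πB i + l i + σB i = e) :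
    matchingSchedule t A πA σA πB σB i 1 + (l i + (3 * t - e)) + 1 ≤
      matchingSchedule t A πA σA πB σB i 0 := by
  have hσ := hσB.mapsTo hi
  simp only [coe_Icc, Set.mem_Icc] at hσ
  simp only [matchingSchedule_of_notMem (disjoint_right.1 hAB hi), Matrix.cons_val_zero,
    Matrix.cons_val_one]
  omega

theorem feasibleSchedule_matchingSchedule (he : e ≤ 3 * t) (hAB : Disjoint A B)
    (hunion : A ∪ B = Icc 1 (2 * t)) (hπA : Set.BijOn πA ↑A ↑(Icc 1 t))
    (hσA : Set.BijOn σA ↑A ↑(Icc (t + 1) (2 * t)))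
    (hπB : Set.BijOn πB ↑B ↑(Icc (t + 1) (2 * t))) (hσB : Set.BijOn σB ↑B ↑(Icc 1 t))
    (heqA : ∀ i ∈ A, πA i + l i + σA i = e) (heqB : ∀ i ∈ B, πB i + l i + σB i = e) :
    FeasibleSchedule (2 * t) (fun i => l i + (3 * t - e)) (matchingSchedule t A πA σA πB σB) := by
  rw [FeasibleSchedule, ← hunion]
  refine ⟨injOn_matchingSchedule hAB hπA hσA hπB hσB, fun i hi => ?_⟩
  rcases mem_union.1 hi with hi | hi
  · exact Or.inl (matchingSchedule_lag_left he hπA hi (heqA i hi))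
  · exact Or.inr (matchingSchedule_lag_right he hAB hσB hi (heqB i hi))

theorem sum_completionTime_matchingSchedule (hAB : Disjoint A B)
    (hπA : Set.BijOn πA ↑A ↑(Icc 1 t)) (hσA : Set.BijOn σA ↑A ↑(Icc (t + 1) (2 * t)))
    (hπB : Set.BijOn πB ↑B ↑(Icc (t + 1) (2 * t))) (hσB : Set.BijOn σB ↑B ↑(Icc 1 t)) :
    ∑ i ∈ A ∪ B, completionTime (matchingSchedule t A πA σA πB σB) i = t * (3 * t + 1) := by
  set s := matchingSchedule t A πA σA πB σB
  have hA0 : Set.BijOn (s · 0) A (Ico 0 t) := bijOn_matchingSchedule_zero_left hπA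
  have hA1 : Set.BijOn (s · 1) A (Ico t (2 * t)) := bijOn_matchingSchedule_one_left hσA
  have hB0 : Set.BijOn (s · 0) B (Ico t (2 * t)) := bijOn_matchingSchedule_zero_right hAB hπB
  have hB1 : Set.BijOn (s · 1) B (Ico 0 t) := bijOn_matchingSchedule_one_right hAB hσB
  have hsumA : ∑ i ∈ A, completionTime s i = ∑ k ∈ Ico t (2 * t), (k + 1) :=
    sum_nbij (s · 1) (fun i hi => hA1.mapsTo hi) hA1.injOn hA1.surjOn fun i hi => by
      have h0 := hA0.mapsTo hi
      have h1 := hA1.mapsTo hi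
      simp only [coe_Ico, Set.mem_Ico] at h0 h1
      rw [completionTime, max_eq_right (by omega)]
  have hsumB : ∑ i ∈ B, completionTime s i = ∑ k ∈ Ico t (2 * t), (k + 1) :=
    sum_nbij (s · 0) (fun i hi => hB0.mapsTo hi) hB0.injOn hB0.surjOn fun i hi => by
      have h0 := hB0.mapsTo hi
      have h1 := hB1.mapsTo hi
      simp only [coe_Ico, Set.mem_Ico] at h0 h1
      rw [completionTime, max_eq_left (by omega)]
  rw [sum_union hAB, hsumA, hsumB, ← Nat.sum_Ico_two_mul_succ_mul_two, mul_two]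

end MatchingSchedule

theorem stmt_2_general (n e : ℕ) (l : ℕ → ℕ) (hne : Even n)
    (h2 : e < 3 * n / 2)
    (hyes : PRN3DMYes n e l) :
    ∃ s : ℕ → Fin 2 → ℕ,
      FeasibleSchedule n (fun i => l i + (3 * n / 2 - e)) s ∧
      ∑ i ∈ Finset.Icc 1 n, completionTime s i = n / 2 * (3 * n / 2 + 1) := by
  obtain ⟨t, rfl⟩ := hne.two_dvd
  obtain ⟨A, B, πA, σA, πB, σB, hAB, hunion, -, -, hπA, hσA, hπB, hσB, heqA, heqB⟩ := hyes
  have hhalf : 2 * t / 2 = t := by omega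
  have h3half : 3 * (2 * t) / 2 = 3 * t := by omega
  rw [hhalf] at hπA hσA hπB hσB
  rw [h3half] at h2 ⊢
  rw [hhalf, ← hunion]
  exact ⟨_, feasibleSchedule_matchingSchedule h2.le hAB hunion hπA hσA hπB hσB heqA heqB,
    sum_completionTime_matchingSchedule hAB hπA hσA hπB hσB⟩

/-- If the PRN3DM instance is a yes-instance, then there is a feasible schedule
for the two-machine unit-time open shop with time lags `L i = l i + Δ` whose
total completion time equals `F = (n/2) * (3n/2 + 1)`. -/
theorem stmt_2 (n e : ℕ) (l : ℕ → ℕ) (hn : 0 < n) (hne : Even n)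
    (h1 : n < e) (h2 : e < 3 * n / 2)
    (hsum : ∑ i ∈ Finset.Icc 1 n, l i = n * (e - n - 1))
    (hyes : PRN3DMYes n e l) :
    ∃ s : ℕ → Fin 2 → ℕ,
      FeasibleSchedule n (fun i => l i + (3 * n / 2 - e)) s ∧
      ∑ i ∈ Finset.Icc 1 n, completionTime s i = n / 2 * (3 * n / 2 + 1) :=
  stmt_2_general n e l hne h2 hyes
end

section
/- Let m be a positive integer and let x_1 ≤ x_2 ≤ … ≤ x_{2m} be positive integers such that no value occurs more than twice among x_1,…,x_{2m}. If Σ_{k=1}^{2m} x_k ≤ m(m+1), then x_{2i−1} = x_{2i} = i for every i = 1,…,m; in particular the multiset {x_1,…,x_{2m}} equals {1,1,2,2,…,m,m}. -/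
/-!
By monotonicity, `x 1, …, x k` all lie in `{1, …, x k}`, and each value is taken at most twice,
so `k ≤ 2 * x k`, i.e. `x k ≥ ⌈k / 2⌉`. These lower bounds already sum to `m * (m + 1)`,
so the sum bound forces `x k = ⌈k / 2⌉` for every `k`.
-/

open Finset

theorem Icc_one_add_one_val (n : ℕ) : (Icc 1 (n + 1)).val = (n + 1) ::ₘ (Icc 1 n).val := by
  rw [Icc_eq_cons_Ico (by omega), cons_val, Ico_add_one_right_eq_Icc]

theorem map_Icc_one_two_mul_div_two (m : ℕ) :
    (Icc 1 (2 * m)).val.map (fun k => (k + 1) / 2) = 2 • (Icc 1 m).val := by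
  induction m with
  | zero => simp
  | succ m ih =>
    rw [show 2 * (m + 1) = 2 * m + 1 + 1 by ring, Icc_one_add_one_val, Icc_one_add_one_val,
      Icc_one_add_one_val, Multiset.map_cons, Multiset.map_cons, ih, two_nsmul, two_nsmul]
    simp only [Multiset.cons_add, Multiset.add_cons]
    congr 2 <;> omega

theorem sum_Icc_one_two_mul_div_two (m : ℕ) :
    ∑ k ∈ Icc 1 (2 * m), (k + 1) / 2 = m * (m + 1) := by
  rw [sum_eq_multiset_sum, map_Icc_one_two_mul_div_two, Multiset.sum_nsmul, smul_eq_mul,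
    sum_val]
  induction m with
  | zero => simp
  | succ m ih => rw [sum_Icc_succ_top (by omega), mul_add, ih, id]; ring

theorem le_mul_of_monotoneOn_of_card_fiber_le {n c : ℕ} {x : ℕ → ℕ}
    (hpos : ∀ k ∈ Icc 1 n, 0 < x k)
    (hmono : ∀ j ∈ Icc 1 n, ∀ k ∈ Icc 1 n, j ≤ k → x j ≤ x k)
    (hfiber : ∀ v, #{k ∈ Icc 1 n | x k = v} ≤ c) {k : ℕ} (hk : k ∈ Icc 1 n) :
    k ≤ c * x k := by
  have hsub : Icc 1 k ⊆ Icc 1 n := Icc_subset_Icc_right (mem_Icc.mp hk).2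
  have hmaps : ∀ j ∈ Icc 1 k, x j ∈ Icc 1 (x k) := fun j hj =>
    mem_Icc.mpr ⟨hpos j (hsub hj), hmono j (hsub hj) k hk (mem_Icc.mp hj).2⟩
  have := card_le_mul_card_image_of_maps_to hmaps c fun v _ =>
    (card_le_card (filter_subset_filter _ hsub)).trans (hfiber v)
  simpa using this

theorem stmt_3_general (m : ℕ) (x : ℕ → ℕ)
    (hpos : ∀ k ∈ Finset.Icc 1 (2 * m), 0 < x k)
    (hmono : ∀ j ∈ Finset.Icc 1 (2 * m), ∀ k ∈ Finset.Icc 1 (2 * m),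
      j ≤ k → x j ≤ x k)
    (htwice : ∀ v : ℕ,
      ((Finset.Icc 1 (2 * m)).filter (fun k => x k = v)).card ≤ 2)
    (hsum : ∑ k ∈ Finset.Icc 1 (2 * m), x k ≤ m * (m + 1)) :
    (∀ i ∈ Finset.Icc 1 m, x (2 * i - 1) = i ∧ x (2 * i) = i) ∧
    (Finset.Icc 1 (2 * m)).val.map x = 2 • (Finset.Icc 1 m).val := by
  have hlow : ∀ k ∈ Icc 1 (2 * m), (k + 1) / 2 ≤ x k := fun k hk => by
    have := le_mul_of_monotoneOn_of_card_fiber_le hpos hmono htwice hk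
    omega
  have hsum_eq : ∑ k ∈ Icc 1 (2 * m), (k + 1) / 2 = ∑ k ∈ Icc 1 (2 * m), x k :=
    le_antisymm (sum_le_sum hlow) (sum_Icc_one_two_mul_div_two m ▸ hsum)
  have hx : ∀ k ∈ Icc 1 (2 * m), x k = (k + 1) / 2 := fun k hk =>
    ((sum_eq_sum_iff_of_le hlow).mp hsum_eq k hk).symm
  refine ⟨fun i hi => ?_, ?_⟩
  · have hi' := mem_Icc.mp hi
    rw [hx (2 * i - 1) (mem_Icc.mpr (by omega)), hx (2 * i) (mem_Icc.mpr (by omega))]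
    omega
  · rw [Multiset.map_congr rfl hx, map_Icc_one_two_mul_div_two]

/-- Exchange argument: if `x 1 ≤ x 2 ≤ … ≤ x (2m)` are positive integers, no
value occurring more than twice, and their sum is at most `m * (m + 1)`, then
`x (2i-1) = x (2i) = i` for each `i = 1, …, m`. -/
theorem stmt_3 (m : ℕ) (hm : 0 < m) (x : ℕ → ℕ)
    (hpos : ∀ k ∈ Finset.Icc 1 (2 * m), 0 < x k)
    (hmono : ∀ j ∈ Finset.Icc 1 (2 * m), ∀ k ∈ Finset.Icc 1 (2 * m),
      j ≤ k → x j ≤ x k)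
    (htwice : ∀ v : ℕ,
      ((Finset.Icc 1 (2 * m)).filter (fun k => x k = v)).card ≤ 2)
    (hsum : ∑ k ∈ Finset.Icc 1 (2 * m), x k ≤ m * (m + 1)) :
    (∀ i ∈ Finset.Icc 1 m, x (2 * i - 1) = i ∧ x (2 * i) = i) ∧
    (Finset.Icc 1 (2 * m)).val.map x = 2 • (Finset.Icc 1 m).val :=
  stmt_3_general m x hpos hmono htwice hsum
end

section
/- Let n be a positive even integer, e an integer with n < e < 3n/2, and l_1,…,l_n nonnegative integers with Σ_{i=1}^{n} l_i = n(e − n − 1); set Δ = 3n/2 − e, L_i = l_i + Δ, and F = (n/2)(3n/2 + 1). Let s be any feasible schedule for the two-machine unit-time open shop with time lags L_1,…,L_n whose total completion time satisfies Σ_{i=1}^{n} C_i ≤ F. Then: (a) the multiset of earlier-operation completion times {min(s(i,1), s(i,2)) + 1 : i = 1,…,n} equals {1,1,2,2,…,n/2,n/2}; (b) the multiset of job completion times {C_i : i = 1,…,n} equals {n/2+1, n/2+1, n/2+2, n/2+2, …, n, n}; in particular every job completes after time n/2, the makespan max_i C_i equals n, and Σ_{i=1}^{n} C_i = F. -/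
/-!
Write `n = 2m`. A multiset of `c k` naturals in which no value occurs more than `c` times sums
to at least `c (0 + ⋯ + (k - 1))`, with equality only for `c • {0, …, k - 1}`. With `c = 1` this
bounds the start times on each machine; together with `max ≥ min + L i + 1` for every job and
`∑ L i = n (m - 1)` it shows that `F` is a lower bound for `∑ C i`. A schedule meeting `F`
therefore keeps both machines busy from time `0` and has its earlier start times summing to
`2 (0 + ⋯ + (m - 1))`. Every value occurs at most twice among the earlier start times (once per
machine), so the equality case with `c = 2` makes them `0, 0, …, m - 1, m - 1`, and the later
ones are the complement `m, m, …, 2m - 1, 2m - 1`.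
-/

namespace Multiset

variable {c k : ℕ} {P : Multiset ℕ}

theorem count_nsmul_range (v : ℕ) : count v (c • range k) = if v < k then c else 0 := by
  simp [count_nsmul, count_eq_of_nodup (nodup_range k)]

theorem filter_lt_le_nsmul_range (hc : ∀ v, P.count v ≤ c) :
    P.filter (· < k) ≤ c • range k := by
  refine le_iff_count.mpr fun v => ?_
  rw [count_filter, count_nsmul_range]
  split_ifs
  exacts [hc v, le_rfl]

/-- Each of the `card (c • range k - P)` values missing from `P` below `k` is traded for a value
`≥ k`, which costs at least one more. -/
theorem sum_nsmul_range_add_card_tsub_le_sum (hc : ∀ v, P.count v ≤ c)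
    (hcard : card P = c * k) : (c • range k).sum + card (c • range k - P) ≤ P.sum := by
  set R := c • range k
  set small := P.filter (· < k)
  set large := P.filter (fun v => ¬ v < k)
  set D := R - small
  have hR : small + D = R := add_tsub_cancel_of_le (filter_lt_le_nsmul_range hc)
  have hP : small + large = P := filter_add_not _ P
  have hcardD : card D = card large := by
    have h1 := congrArg card hR
    have h2 := congrArg card hP
    have h3 : card R = c * k := by simp [R]
    simp only [card_add] at h1 h2
    omega
  have hD : D.sum + card D ≤ k * card D := by
    have : ∀ x ∈ D, x + 1 ≤ k := fun x hx =>
      (mem_range.mp (mem_of_mem_nsmul (mem_of_le tsub_le_self hx))).nat_succ_le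
    have := sum_map_le_sum_map _ _ this
    simpa [sum_map_add, mul_comm] using this
  have hlarge : k * card large ≤ large.sum := by
    rw [mul_comm]
    exact card_nsmul_le_sum fun x hx => not_lt.mp (mem_filter.mp hx).2
  have hsub : card (R - P) ≤ card D := card_le_card (tsub_le_tsub_left (filter_le _ P) R)
  have hsumR : R.sum = small.sum + D.sum := by rw [← hR, sum_add]
  rw [hcardD] at hD hsub
  calc R.sum + card (R - P) ≤ small.sum + D.sum + card large := by omega
    _ ≤ small.sum + large.sum := by omega
    _ = P.sum := by rw [← sum_add, hP]

theorem sum_nsmul_range_le_sum (hc : ∀ v, P.count v ≤ c) (hcard : card P = c * k) :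
    (c • range k).sum ≤ P.sum :=
  le_of_add_le_left (sum_nsmul_range_add_card_tsub_le_sum hc hcard)

theorem eq_nsmul_range_of_sum_le (hc : ∀ v, P.count v ≤ c) (hcard : card P = c * k)
    (hsum : P.sum ≤ (c • range k).sum) : P = c • range k := by
  have hR := sum_nsmul_range_add_card_tsub_le_sum hc hcard
  have hle : c • range k ≤ P := tsub_eq_zero_iff_le.mp (card_eq_zero.mp (by omega))
  exact (eq_of_le_of_card_le hle (by simp [hcard])).symm

theorem sum_range_mul_two_add (k : ℕ) : (range k).sum * 2 + k = k * k := by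
  have := Finset.sum_range_id_mul_two k
  rw [Finset.sum_eq_multiset_sum, map_id', Finset.range_val] at this
  rw [this]
  cases k <;> simp [Nat.mul_succ]

theorem map_add_one_range (k : ℕ) : (range k).map (· + 1) = (Finset.Icc 1 k).val := by
  rw [← Finset.Ico_add_one_right_eq_Icc, ← Finset.range_val, Finset.range_eq_Ico]
  exact map_add_right_Ico 0 k 1

theorem map_add_one_Ico (a b : ℕ) : (Ico a b).map (· + 1) = (Finset.Icc (a + 1) b).val := by
  rw [← Finset.Ico_add_one_right_eq_Icc]
  exact map_add_right_Ico a b 1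

theorem map_min_add_map_max {ι α : Type*} [LinearOrder α] (f g : ι → α) (J : Multiset ι) :
    J.map (fun i => min (f i) (g i)) + J.map (fun i => max (f i) (g i)) = J.map f + J.map g := by
  induction J using Multiset.induction_on with
  | empty => simp
  | cons a J ih =>
    simp only [map_cons, cons_add, add_cons] at *
    rcases le_total (f a) (g a) with h | h
    · rw [min_eq_left h, max_eq_right h, ih]
    · rw [min_eq_right h, max_eq_left h, ih, cons_swap]

theorem map_min_max_eq_of_sum_le {ι : Type*} {J : Multiset ι} {f g : ι → ℕ} {m : ℕ}
    (hf : J.map f = range (m + m)) (hg : J.map g = range (m + m))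
    (hsum : (J.map fun i => min (f i) (g i)).sum ≤ (2 • range m).sum) :
    J.map (fun i => min (f i) (g i)) = 2 • range m ∧
      J.map (fun i => max (f i) (g i)) = 2 • Ico m (m + m) := by
  have hPQ := map_min_add_map_max f g J
  rw [hf, hg, ← two_nsmul] at hPQ
  have hcount : ∀ v, (J.map fun i => min (f i) (g i)).count v ≤ 2 := fun v =>
    (count_le_of_le v (le_add_right _ _)).trans
      (by rw [hPQ, count_nsmul_range]; split_ifs <;> omega)
  have hcard : card (J.map fun i => min (f i) (g i)) = 2 * m := by
    rw [card_map, ← card_map f, hf, card_range]; omega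
  have hP := eq_nsmul_range_of_sum_le hcount hcard hsum
  have hsplit : range m + Ico m (m + m) = range (m + m) := by
    simp only [← Finset.range_val, Finset.range_eq_Ico]
    exact Ico_add_Ico_eq_Ico (Nat.zero_le m) (Nat.le_add_right m m)
  refine ⟨hP, add_left_cancel (a := 2 • range m) ?_⟩
  rw [← nsmul_add, hsplit, ← hPQ, hP]

end Multiset

namespace Finset

variable {ι α : Type*} {S : Finset ι} {T : Finset α} {f : ι → α} {c : ℕ}

theorem mem_of_map_val_eq_nsmul (h : S.val.map f = c • T.val) {i : ι} (hi : i ∈ S) :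
    f i ∈ T :=
  Multiset.mem_of_mem_nsmul (h ▸ Multiset.mem_map_of_mem f hi)

theorem sup_eq_of_map_val_eq_nsmul_Icc {f : ι → ℕ} {a b : ℕ} (hc : c ≠ 0) (hab : a ≤ b)
    (h : S.val.map f = c • (Icc a b).val) : S.sup f = b := by
  have hb : b ∈ S.val.map f :=
    h ▸ Multiset.mem_nsmul.mpr ⟨hc, mem_val.mpr (right_mem_Icc.mpr hab)⟩
  obtain ⟨j, hj, hfj⟩ := Multiset.mem_map.mp hb
  exact le_antisymm (Finset.sup_le fun i hi => (mem_Icc.mp (mem_of_map_val_eq_nsmul h hi)).2)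
    (hfj ▸ le_sup hj)

end Finset

namespace FeasibleSchedule

variable {n : ℕ} {L : ℕ → ℕ} {s : ℕ → Fin 2 → ℕ}

theorem min_add_lag_add_one_le_max (h : FeasibleSchedule n L s) {i : ℕ}
    (hi : i ∈ Finset.Icc 1 n) :
    min (s i 0) (s i 1) + L i + 1 ≤ max (s i 0) (s i 1) := by
  rcases h.2 i hi with hlt | hlt <;> omega

theorem nodup_map_start (h : FeasibleSchedule n L s) (k : Fin 2) :
    ((Finset.Icc 1 n).val.map (s · k)).Nodup :=
  (Finset.Icc 1 n).nodup.map_on fun _ hx _ hy hxy => h.1 k hx hy hxy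

theorem sum_range_le_sum_start (h : FeasibleSchedule n L s) (k : Fin 2) :
    (Multiset.range n).sum ≤ ∑ i ∈ Finset.Icc 1 n, s i k := by
  have := Multiset.sum_nsmul_range_le_sum (c := 1) (k := n)
    (Multiset.nodup_iff_count_le_one.mp (h.nodup_map_start k)) (by simp)
  rw [Finset.sum_eq_multiset_sum]
  simpa only [one_nsmul] using this

theorem map_start_eq_range (h : FeasibleSchedule n L s) (k : Fin 2)
    (hsum : ∑ i ∈ Finset.Icc 1 n, s i k ≤ (Multiset.range n).sum) :
    (Finset.Icc 1 n).val.map (s · k) = Multiset.range n := by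
  have := Multiset.eq_nsmul_range_of_sum_le (c := 1) (k := n)
    (Multiset.nodup_iff_count_le_one.mp (h.nodup_map_start k)) (by simp)
    (by rwa [one_nsmul, ← Finset.sum_eq_multiset_sum])
  rwa [one_nsmul] at this

theorem sum_min_add_sum_lag_le (h : FeasibleSchedule n L s) :
    ∑ i ∈ Finset.Icc 1 n, min (s i 0) (s i 1) + ∑ i ∈ Finset.Icc 1 n, L i + 2 * n ≤
      ∑ i ∈ Finset.Icc 1 n, completionTime s i := by
  have hlag : ∑ i ∈ Finset.Icc 1 n, (min (s i 0) (s i 1) + L i + 1) ≤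
      ∑ i ∈ Finset.Icc 1 n, max (s i 0) (s i 1) :=
    Finset.sum_le_sum fun i hi => h.min_add_lag_add_one_le_max hi
  simp only [completionTime, Finset.sum_add_distrib, Finset.sum_const, Nat.card_Icc, smul_eq_mul,
    mul_one] at hlag ⊢
  omega

end FeasibleSchedule

theorem sum_start_add_sum_start_eq (n : ℕ) (s : ℕ → Fin 2 → ℕ) :
    ∑ i ∈ Finset.Icc 1 n, s i 0 + ∑ i ∈ Finset.Icc 1 n, s i 1 + n =
      ∑ i ∈ Finset.Icc 1 n, min (s i 0) (s i 1) + ∑ i ∈ Finset.Icc 1 n, completionTime s i := by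
  have hminmax :=
    Finset.sum_congr rfl fun i (_ : i ∈ Finset.Icc 1 n) => min_add_max (s i 0) (s i 1)
  simp only [completionTime, Finset.sum_add_distrib, Finset.sum_const, Nat.card_Icc, smul_eq_mul,
    mul_one] at hminmax ⊢
  omega

/-- Structure of any feasible schedule meeting the threshold `F`: the earlier
operation completion times form the multiset `{1,1,…,n/2,n/2}`, the job
completion times form the multiset `{n/2+1, n/2+1, …, n, n}`; in particular
every job completes after time `n/2`, the makespan is `n`, and the total
completion time equals `F`. -/
theorem stmt_4 (n e : ℕ) (l : ℕ → ℕ) (hn : 0 < n) (hne : Even n)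
    (h1 : n < e) (h2 : e < 3 * n / 2)
    (hsum : ∑ i ∈ Finset.Icc 1 n, l i = n * (e - n - 1))
    (s : ℕ → Fin 2 → ℕ)
    (hfeas : FeasibleSchedule n (fun i => l i + (3 * n / 2 - e)) s)
    (hF : ∑ i ∈ Finset.Icc 1 n, completionTime s i ≤ n / 2 * (3 * n / 2 + 1)) :
    (Finset.Icc 1 n).val.map (fun i => min (s i 0) (s i 1) + 1) =
      2 • (Finset.Icc 1 (n / 2)).val ∧
    (Finset.Icc 1 n).val.map (fun i => completionTime s i) =
      2 • (Finset.Icc (n / 2 + 1) n).val ∧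
    (∀ i ∈ Finset.Icc 1 n, n / 2 < completionTime s i) ∧
    ((Finset.Icc 1 n).sup fun i => completionTime s i) = n ∧
    ∑ i ∈ Finset.Icc 1 n, completionTime s i = n / 2 * (3 * n / 2 + 1) := by
  obtain ⟨m, rfl⟩ := hne
  simp only [show (m + m) / 2 = m by omega, show 3 * (m + m) / 2 = 3 * m by omega]
    at h2 hfeas hF ⊢
  have hlag : ∑ i ∈ Finset.Icc 1 (m + m), (l i + (3 * m - e)) + (m + m) = 2 * (m * m) := by
    have hgap : e - (m + m) - 1 + (3 * m - e) + 1 = m := by omega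
    rw [Finset.sum_add_distrib, hsum, Finset.sum_const, Nat.card_Icc, Nat.add_sub_cancel,
      smul_eq_mul, ← mul_add, ← mul_add_one, hgap]
    ring
  have hlower := hfeas.sum_min_add_sum_lag_le
  have hstart := sum_start_add_sum_start_eq (m + m) s
  have hstart0 := hfeas.sum_range_le_sum_start 0
  have hstart1 := hfeas.sum_range_le_sum_start 1
  -- `F` is also a lower bound for `∑ C i`, so all the estimates above are tight.
  obtain ⟨hs0, hs1, hmin, hC⟩ :
      ∑ i ∈ Finset.Icc 1 (m + m), s i 0 ≤ (Multiset.range (m + m)).sum ∧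
      ∑ i ∈ Finset.Icc 1 (m + m), s i 1 ≤ (Multiset.range (m + m)).sum ∧
      ∑ i ∈ Finset.Icc 1 (m + m), min (s i 0) (s i 1) ≤ (2 • Multiset.range m).sum ∧
      m * (3 * m + 1) ≤ ∑ i ∈ Finset.Icc 1 (m + m), completionTime s i := by
    have := Multiset.sum_range_mul_two_add m
    have := Multiset.sum_range_mul_two_add (m + m)
    have : (m + m) * (m + m) = 4 * (m * m) := by ring
    have : m * (3 * m + 1) = 3 * (m * m) + m := by ring
    rw [Multiset.sum_nsmul, smul_eq_mul]
    omega
  rw [Finset.sum_eq_multiset_sum] at hmin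
  obtain ⟨hP, hQ⟩ := Multiset.map_min_max_eq_of_sum_le (hfeas.map_start_eq_range 0 hs0)
    (hfeas.map_start_eq_range 1 hs1) hmin
  have hcompl : (Finset.Icc 1 (m + m)).val.map (fun i => completionTime s i) =
      2 • (Finset.Icc (m + 1) (m + m)).val := by
    have := congrArg (Multiset.map (· + 1)) hQ
    rwa [Multiset.map_map, Multiset.map_nsmul, Multiset.map_add_one_Ico] at this
  refine ⟨?_, hcompl,
    fun i hi => (Finset.mem_Icc.mp (Finset.mem_of_map_val_eq_nsmul hcompl hi)).1,
    Finset.sup_eq_of_map_val_eq_nsmul_Icc two_ne_zero (by omega) hcompl, le_antisymm hF hC⟩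
  have := congrArg (Multiset.map (· + 1)) hP
  rwa [Multiset.map_map, Multiset.map_nsmul, Multiset.map_add_one_range] at this
end

section
/- Let n be a positive even integer, e an integer with n < e < 3n/2, and l_1,…,l_n nonnegative integers with Σ_{i=1}^{n} l_i = n(e − n − 1); set Δ = 3n/2 − e, L_i = l_i + Δ, and F = (n/2)(3n/2 + 1). If there exists a feasible schedule for the two-machine unit-time open shop with time lags L_1,…,L_n whose total completion time satisfies Σ_{i=1}^{n} C_i ≤ F, then the PRN3DM instance (n, e, l_1,…,l_n) is a yes-instance: there exist a partition of {1,…,n} into two sets C and D each of size n/2 and bijections π_C : C → {1,…,n/2}, σ_C : C → {n/2+1,…,n}, π_D : D → {n/2+1,…,n}, σ_D : D → {1,…,n/2} such that π_C(i) + l_i + σ_C(i) = e for all i ∈ C and π_D(j) + l_j + σ_D(j) = e for all j ∈ D. -/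
/-!
Split the jobs into the set `A` of those processed first on machine 0 and the set `B` of those
processed first on machine 1, and write `n = 2k`, `a = #A`, `b = #B`. The first operations of `A`
start at distinct times on machine 0, so their start times sum to at least `0 + 1 + ⋯ + (a - 1)`,
and likewise for `B`. Adding the lags, whose sum is `2k(k - 1)`, the total completion time is
at least `(a² + b²)/2 + 2k² + k`, which exceeds `F = k(3k + 1)` unless `a = b = k` and every
bound is tight. Then the first operations of `A` (resp. `B`) fill the slots `0, …, k - 1` of
machine 0 (resp. 1), so the second operations start at `k` or later, and tightness forces them to
fill the slots `k, …, 2k - 1`, each exactly `L i` after the first operation completes. Hence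
`π i = (first start) + 1` and `σ i = 3k - (second start)` solve the PRN3DM instance.
-/

open Finset

namespace Finset

lemma two_mul_sum_range_id_add (n : ℕ) : 2 * ∑ i ∈ range n, i + n = n * n := by
  induction n with
  | zero => simp
  | succ m ih => rw [sum_range_succ]; linarith

variable {ι : Type*} {S : Finset ι} {f : ι → ℕ} {c : ℕ}

lemma sum_range_add_le_sum_of_injOn (hf : Set.InjOn f S) (hc : ∀ i ∈ S, c ≤ f i) :
    ∑ x ∈ range #S, (c + x) ≤ ∑ i ∈ S, f i := by
  classical
  have hcast : Set.InjOn (fun i => (f i : ℤ)) S := Nat.cast_injective.comp_injOn hf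
  have h := Finset.sum_range_le_sum (s := S.image fun i => (f i : ℤ)) (c := c)
    (by simpa using fun i hi => hc i hi)
  rw [card_image_of_injOn hcast, sum_image hcast] at h
  exact_mod_cast h

lemma bijOn_Ico_of_sum_le (hf : Set.InjOn f S) (hc : ∀ i ∈ S, c ≤ f i)
    (h : ∑ i ∈ S, f i ≤ ∑ x ∈ range #S, (c + x)) : Set.BijOn f S (Ico c (c + #S)) := by
  classical
  have hmaps : Set.MapsTo f S (Ico c (c + #S)) := by
    intro i hi
    refine mem_Ico.2 ⟨hc i hi, ?_⟩
    by_contra! hbig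
    have herase := sum_range_add_le_sum_of_injOn (hf.mono (erase_subset i S))
      fun j hj => hc j (mem_of_mem_erase hj)
    obtain ⟨m, hm⟩ : ∃ m, #S = m + 1 := ⟨#S - 1, by have := card_pos.2 ⟨i, hi⟩; omega⟩
    rw [card_erase_of_mem hi, hm, add_tsub_cancel_right] at herase
    rw [← add_sum_erase S f hi, hm, sum_range_succ] at h
    omega
  exact ⟨hmaps, hf, surjOn_of_injOn_of_card_le f hmaps hf (by simp)⟩

end Finset

section OneGroup

variable {ι : Type*} {S : Finset ι} {f g L : ι → ℕ}

lemma sum_range_add_sum_add_card_le (hf : Set.InjOn f S)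
    (hlag : ∀ i ∈ S, f i + L i + 1 ≤ g i) :
    ∑ x ∈ range #S, x + ∑ i ∈ S, L i + #S ≤ ∑ i ∈ S, g i := by
  have hf0 := sum_range_add_le_sum_of_injOn (c := 0) hf fun i _ => Nat.zero_le (f i)
  have hfg := sum_le_sum hlag
  simp only [zero_add, sum_add_distrib, sum_const, smul_eq_mul, mul_one] at hf0 hfg
  omega

lemma bijOn_range_and_eq_of_sum_le (hf : Set.InjOn f S) (hlag : ∀ i ∈ S, f i + L i + 1 ≤ g i)
    (h : ∑ i ∈ S, g i ≤ ∑ x ∈ range #S, x + ∑ i ∈ S, L i + #S) :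
    Set.BijOn f S (range #S) ∧ ∀ i ∈ S, g i = f i + L i + 1 := by
  have hf0 := sum_range_add_le_sum_of_injOn (c := 0) hf fun i _ => Nat.zero_le (f i)
  have hfg := sum_le_sum hlag
  simp only [zero_add, sum_add_distrib, sum_const, smul_eq_mul, mul_one] at hf0 hfg
  constructor
  · have hbij := bijOn_Ico_of_sum_le (c := 0) hf (fun i _ => Nat.zero_le (f i))
      (by simp only [zero_add]; omega)
    rwa [zero_add, ← range_eq_Ico] at hbij
  · refine fun i hi => ((sum_eq_sum_iff_of_le hlag).1 ?_ i hi).symm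
    simp only [sum_add_distrib, sum_const, smul_eq_mul, mul_one]
    omega

end OneGroup

lemma eq_of_add_eq_of_sum_range_add_le {a b k : ℕ} (hab : a + b = 2 * k)
    (h : ∑ x ∈ range a, x + ∑ x ∈ range b, x ≤ 2 * ∑ x ∈ range k, x) : a = k := by
  have ha := two_mul_sum_range_id_add a
  have hb := two_mul_sum_range_id_add b
  have hk := two_mul_sum_range_id_add k
  nlinarith [sq_nonneg ((a : ℤ) - k)]

/-- Start times `p` and `q` on the two machines of a unit-time schedule of the `2 * k` jobs
`A ∪ B` with time lags `L`, where the jobs of `A` run on `p` first and those of `B` on `q` first,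
under the lag sum `2k(k - 1)` and the completion time bound `k(3k + 1)` of the reduction. -/
structure SplitSchedule {ι : Type*} [DecidableEq ι] (A B : Finset ι) (p q L : ι → ℕ)
    (k : ℕ) : Prop where
  disjoint : Disjoint A B
  card_add_card : #A + #B = 2 * k
  injOn_fst : Set.InjOn p ↑(A ∪ B)
  injOn_snd : Set.InjOn q ↑(A ∪ B)
  lag_left : ∀ i ∈ A, p i + L i + 1 ≤ q i
  lag_right : ∀ i ∈ B, q i + L i + 1 ≤ p i
  sum_lag : ∑ i ∈ A ∪ B, L i + 2 * k = 2 * k * k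
  sum_completion : ∑ i ∈ A, (q i + 1) + ∑ i ∈ B, (p i + 1) ≤ k * (3 * k + 1)

namespace SplitSchedule

variable {ι : Type*} [DecidableEq ι] {A B : Finset ι} {p q L : ι → ℕ} {k : ℕ}

lemma symm (h : SplitSchedule A B p q L k) : SplitSchedule B A q p L k where
  disjoint := h.disjoint.symm
  card_add_card := by rw [add_comm, h.card_add_card]
  injOn_fst := union_comm A B ▸ h.injOn_snd
  injOn_snd := union_comm A B ▸ h.injOn_fst
  lag_left := h.lag_right
  lag_right := h.lag_left
  sum_lag := union_comm A B ▸ h.sum_lag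
  sum_completion := by rw [add_comm]; exact h.sum_completion

lemma sum_range_add_sum_add_card_le_left (h : SplitSchedule A B p q L k) :
    ∑ x ∈ range #A, x + ∑ i ∈ A, L i + #A ≤ ∑ i ∈ A, q i :=
  sum_range_add_sum_add_card_le (h.injOn_fst.mono subset_union_left) h.lag_left

lemma sum_lag_add_sum_lag (h : SplitSchedule A B p q L k) :
    ∑ i ∈ A, L i + ∑ i ∈ B, L i + 2 * k = 2 * k * k := by
  rw [← sum_union h.disjoint]
  exact h.sum_lag

lemma sum_add_sum_add_le (h : SplitSchedule A B p q L k) :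
    ∑ i ∈ A, q i + ∑ i ∈ B, p i + 2 * k ≤ k * (3 * k + 1) := by
  have hC := h.sum_completion
  simp only [sum_add_distrib, sum_const, smul_eq_mul, mul_one] at hC
  have := h.card_add_card
  omega

lemma card_left (h : SplitSchedule A B p q L k) : #A = k := by
  have hA := h.sum_range_add_sum_add_card_le_left
  have hB := h.symm.sum_range_add_sum_add_card_le_left
  have hL := h.sum_lag_add_sum_lag
  have hC := h.sum_add_sum_add_le
  have hk := two_mul_sum_range_id_add k
  refine eq_of_add_eq_of_sum_range_add_le h.card_add_card ?_
  nlinarith [h.card_add_card]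

lemma bijOn_fst_left_and_snd_eq (h : SplitSchedule A B p q L k) :
    Set.BijOn p A (range k) ∧ ∀ i ∈ A, q i = p i + L i + 1 := by
  have hB := h.symm.sum_range_add_sum_add_card_le_left
  have hL := h.sum_lag_add_sum_lag
  have hC := h.sum_add_sum_add_le
  have hk := two_mul_sum_range_id_add k
  rw [h.symm.card_left] at hB
  have := bijOn_range_and_eq_of_sum_le (h.injOn_fst.mono subset_union_left) h.lag_left
    (by rw [h.card_left]; nlinarith)
  rwa [h.card_left] at this

lemma le_snd_left (h : SplitSchedule A B p q L k) : ∀ i ∈ A, k ≤ q i := by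
  intro i hi
  by_contra! hlt
  obtain ⟨j, hj, hji⟩ := h.symm.bijOn_fst_left_and_snd_eq.1.surjOn (mem_range.2 hlt)
  have : j = i := h.injOn_snd (mem_union_right A hj) (mem_union_left B hi) hji
  exact disjoint_left.1 h.disjoint hi (this ▸ hj)

lemma bijOn_snd_left (h : SplitSchedule A B p q L k) : Set.BijOn q A (Ico k (k + k)) := by
  have hC := h.sum_add_sum_add_le
  have hqA := sum_range_add_le_sum_of_injOn (h.injOn_snd.mono subset_union_left) h.le_snd_left
  have hpB := sum_range_add_le_sum_of_injOn (h.injOn_fst.mono subset_union_right)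
    h.symm.le_snd_left
  have hk := two_mul_sum_range_id_add k
  have hsum : ∑ x ∈ range k, (k + x) = k * k + ∑ x ∈ range k, x := by
    rw [sum_add_distrib, sum_const, card_range, smul_eq_mul]
  have hbij := bijOn_Ico_of_sum_le (h.injOn_snd.mono subset_union_left) h.le_snd_left
  rw [h.card_left] at hqA hbij
  rw [h.symm.card_left] at hpB
  exact hbij (by nlinarith)

end SplitSchedule

lemma completionTime_of_lt {s : ℕ → Fin 2 → ℕ} {i : ℕ} (h : s i 0 < s i 1) :
    completionTime s i = s i 1 + 1 := by
  rw [completionTime, max_eq_right h.le]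

lemma completionTime_of_not_lt {s : ℕ → Fin 2 → ℕ} {i : ℕ} (h : ¬s i 0 < s i 1) :
    completionTime s i = s i 0 + 1 := by
  rw [completionTime, max_eq_left (not_lt.1 h)]

lemma FeasibleSchedule.splitSchedule {k : ℕ} {L : ℕ → ℕ} {s : ℕ → Fin 2 → ℕ}
    (hs : FeasibleSchedule (2 * k) L s) (hL : ∑ i ∈ Icc 1 (2 * k), L i + 2 * k = 2 * k * k)
    (hC : ∑ i ∈ Icc 1 (2 * k), completionTime s i ≤ k * (3 * k + 1)) :
    SplitSchedule ((Icc 1 (2 * k)).filter fun i => s i 0 < s i 1)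
      ((Icc 1 (2 * k)).filter fun i => ¬s i 0 < s i 1) (s · 0) (s · 1) L k where
  disjoint := disjoint_filter_filter_not _ _ _
  card_add_card := by rw [card_filter_add_card_filter_not, Nat.card_Icc, add_tsub_cancel_right]
  injOn_fst := by rw [filter_union_filter_not_eq]; exact hs.1 0
  injOn_snd := by rw [filter_union_filter_not_eq]; exact hs.1 1
  lag_left i hi := by
    have := (mem_filter.1 hi).2
    exact (hs.2 i (mem_filter.1 hi).1).resolve_right (by omega)
  lag_right i hi := by
    have := (mem_filter.1 hi).2
    exact (hs.2 i (mem_filter.1 hi).1).resolve_left (by omega)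
  sum_lag := by rwa [filter_union_filter_not_eq]
  sum_completion := by
    rwa [← sum_filter_add_sum_filter_not _ (fun i => s i 0 < s i 1),
      sum_congr rfl fun i hi => completionTime_of_lt (mem_filter.1 hi).2,
      sum_congr rfl fun i hi => completionTime_of_not_lt (mem_filter.1 hi).2] at hC

lemma bijOn_add_one_Ico (a b : ℕ) : Set.BijOn (· + 1) ↑(Ico a b) ↑(Icc (a + 1) b) := by
  refine ⟨fun x hx => ?_, fun x _ y _ h => by simpa using h, fun y hy => ?_⟩
  · simp only [coe_Ico, coe_Icc, Set.mem_Ico, Set.mem_Icc] at hx ⊢; omega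
  · simp only [coe_Ico, coe_Icc, Set.mem_Ico, Set.mem_Icc, Set.mem_image] at hy ⊢
    exact ⟨y - 1, by omega, by omega⟩

lemma bijOn_three_mul_sub_Ico (k : ℕ) :
    Set.BijOn (3 * k - ·) ↑(Ico k (k + k)) ↑(Icc (k + 1) (2 * k)) := by
  refine ⟨fun x hx => ?_, fun x hx y hy h => ?_, fun y hy => ?_⟩
  · simp only [coe_Ico, coe_Icc, Set.mem_Ico, Set.mem_Icc] at hx ⊢; omega
  · simp only [coe_Ico, Set.mem_Ico] at hx hy h; omega
  · simp only [coe_Ico, coe_Icc, Set.mem_Ico, Set.mem_Icc, Set.mem_image] at hy ⊢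
    exact ⟨3 * k - y, by omega, by omega⟩

lemma SplitSchedule.prn3DMYes {A B : Finset ℕ} {p q l : ℕ → ℕ} {k e : ℕ}
    (h : SplitSchedule A B p q (fun i => l i + (3 * k - e)) k) (hAB : A ∪ B = Icc 1 (2 * k))
    (he : e < 3 * k) : PRN3DMYes (2 * k) e l := by
  obtain ⟨hpA, hqA_eq⟩ := h.bijOn_fst_left_and_snd_eq
  obtain ⟨hqB, hpB_eq⟩ := h.symm.bijOn_fst_left_and_snd_eq
  have hqA := h.bijOn_snd_left
  have hpB := h.symm.bijOn_snd_left
  rw [range_eq_Ico] at hpA hqB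
  unfold PRN3DMYes
  rw [show 2 * k / 2 = k by omega]
  refine ⟨A, B, (p · + 1), (3 * k - q ·), (3 * k - p ·), (q · + 1), h.disjoint, hAB,
    h.card_left, h.symm.card_left, (bijOn_add_one_Ico 0 k).comp hpA,
    (bijOn_three_mul_sub_Ico k).comp hqA, (bijOn_three_mul_sub_Ico k).comp hpB,
    (bijOn_add_one_Ico 0 k).comp hqB, fun i hi => ?_, fun i hi => ?_⟩
  · have := mem_Ico.1 (hqA.mapsTo hi)
    have := hqA_eq i hi
    dsimp only
    omega
  · have := mem_Ico.1 (hpB.mapsTo hi)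
    have := hpB_eq i hi
    dsimp only
    omega

theorem stmt_5_general (n e : ℕ) (l : ℕ → ℕ) (hne : Even n)
    (h1 : n < e) (h2 : e < 3 * n / 2)
    (hsum : ∑ i ∈ Finset.Icc 1 n, l i = n * (e - n - 1))
    (hsched : ∃ s : ℕ → Fin 2 → ℕ,
      FeasibleSchedule n (fun i => l i + (3 * n / 2 - e)) s ∧
      ∑ i ∈ Finset.Icc 1 n, completionTime s i ≤ n / 2 * (3 * n / 2 + 1)) :
    PRN3DMYes n e l := by
  obtain ⟨s, hs, hC⟩ := hsched
  obtain ⟨k, rfl⟩ := hne.two_dvd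
  have h3k : 3 * (2 * k) / 2 = 3 * k := by omega
  rw [h3k, show 2 * k / 2 = k by omega] at hC
  rw [h3k] at hs h2
  have hL : ∑ i ∈ Icc 1 (2 * k), (l i + (3 * k - e)) + 2 * k = 2 * k * k := by
    have hk : e - 2 * k - 1 + (3 * k - e) + 1 = k := by omega
    rw [sum_add_distrib, hsum, sum_const, Nat.card_Icc, smul_eq_mul, add_tsub_cancel_right,
      ← mul_add, ← mul_add_one, hk]
  exact (hs.splitSchedule hL hC).prn3DMYes (filter_union_filter_not_eq _ _) h2

/-- If there is a feasible schedule with total completion time at most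
`F = (n/2) * (3n/2 + 1)`, then the PRN3DM instance is a yes-instance. -/
theorem stmt_5 (n e : ℕ) (l : ℕ → ℕ) (hn : 0 < n) (hne : Even n)
    (h1 : n < e) (h2 : e < 3 * n / 2)
    (hsum : ∑ i ∈ Finset.Icc 1 n, l i = n * (e - n - 1))
    (hsched : ∃ s : ℕ → Fin 2 → ℕ,
      FeasibleSchedule n (fun i => l i + (3 * n / 2 - e)) s ∧
      ∑ i ∈ Finset.Icc 1 n, completionTime s i ≤ n / 2 * (3 * n / 2 + 1)) :
    PRN3DMYes n e l :=
  stmt_5_general n e l hne h1 h2 hsum hsched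
end
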